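/- Let S be a hyperbolic circle in ℍ, and suppose that for each x ∈ S we are given a constant curvature curve γ_x of ℍ with γ_x ∩ S = {x}. Then there exist distinct points x, y ∈ S with γ_x ∩ γ_y ≠ ∅; that is, the curves γ_x cannot be pairwise disjoint. -/

import Mathlib

/-!
Parametrize `S` as `θ ↦ c + ρ e^{iθ}`. A generalized circle meeting `S` only at
`x = c + ρ e^{iθ}` is tangent to `S` there (a reflection fixing `S` and the curve would otherwise
produce a second common point), so near `x` it is a polar graph `r = A(φ)` over the angle `θ + φ`
with `A 0 = ρ`, lying strictly on one side of `S` for `0 < |φ| < w`. Uncountably many angles in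
`[0, 1]` but only countably many values of (side, `n` with `1/(n+1) < w`, `⌊θ (n+1)⌋`) give two
angles `θ₁ < θ₂` on the same side with `θ₂ - θ₁` below both widths; then `A₁ (t - θ₁) - A₂ (t - θ₂)` changes sign on
`[θ₁, θ₂]`, and the intermediate value theorem yields a common point of the two curves.
-/

/-- A generalized circle in `ℂ`: either a Euclidean circle of positive radius, or a
Euclidean line (a coset of a one-dimensional `ℝ`-subspace of `ℂ`). -/
def IsGenCircle (C : Set ℂ) : Prop :=
  (∃ (c : ℂ) (ρ : ℝ), 0 < ρ ∧ C = Metric.sphere c ρ) ∨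
  (∃ p v : ℂ, v ≠ 0 ∧ C = {z : ℂ | ∃ t : ℝ, z = p + t • v})

/-- A constant curvature curve of `ℍ`: the trace on `ℍ` of a generalized circle in `ℂ` that
meets the upper half-plane. -/
def IsCCC (γ : Set UpperHalfPlane) : Prop :=
  ∃ C : Set ℂ, IsGenCircle C ∧ (∃ z : UpperHalfPlane, (z : ℂ) ∈ C) ∧
    γ = {z : UpperHalfPlane | (z : ℂ) ∈ C}

/-- A hyperbolic circle of `ℍ`: the trace on `ℍ` of a Euclidean circle entirely contained
in the open upper half-plane. -/
def IsHypCircle (γ : Set UpperHalfPlane) : Prop :=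
  ∃ (c : ℂ) (ρ : ℝ), 0 < ρ ∧ (∀ z ∈ Metric.sphere c ρ, 0 < z.im) ∧
    γ = {z : UpperHalfPlane | (z : ℂ) ∈ Metric.sphere c ρ}

open Complex ComplexConjugate Metric Filter Topology Set
open scoped UpperHalfPlane

theorem eventually_abs_lt {w : ℝ} (hw : 0 < w) : ∀ᶠ φ in 𝓝 (0 : ℝ), |φ| < w := by
  filter_upwards [Metric.ball_mem_nhds (0 : ℝ) hw] with φ hφ
  rwa [mem_ball, Real.dist_0_eq_abs] at hφ

theorem dist_circleMap_add_circleMap_sq (c : ℂ) (r lam θ φ : ℝ) :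
    dist (circleMap c r (θ + φ)) (circleMap c lam θ) ^ 2
      = r ^ 2 - 2 * r * lam * Real.cos φ + lam ^ 2 := by
  rw [Complex.dist_eq, Complex.sq_norm, Complex.normSq_apply]
  simp [circleMap, Complex.exp_re, Complex.exp_im, Real.cos_add, Real.sin_add]
  linear_combination
    (r ^ 2 * (Real.sin φ ^ 2 + Real.cos φ ^ 2) - 2 * r * lam * Real.cos φ + lam ^ 2) *
      Real.sin_sq_add_cos_sq θ + r ^ 2 * Real.sin_sq_add_cos_sq φ

theorem eventually_pos_sign_mul_sub {A B : ℝ → ℝ} {ρ κ : ℝ} (hB : ContinuousAt B 0)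
    (hB0 : B 0 ≠ 0) (hκ : κ ≠ 0) (h : ∀ᶠ φ in 𝓝 0, (A φ - ρ) * B φ = κ * (1 - Real.cos φ)) :
    ∀ᶠ φ in 𝓝 0, φ ≠ 0 → 0 < (SignType.sign (κ * B 0) : ℝ) * (A φ - ρ) := by
  have hBpos : ∀ᶠ φ in 𝓝 0, 0 < B φ * B 0 :=
    (hB.mul continuousAt_const).eventually (lt_mem_nhds (mul_self_pos.2 hB0))
  filter_upwards [h, hBpos, eventually_abs_lt Real.two_pi_pos] with φ hφ hBφ hφπ hφ0
  have hcos : Real.cos φ < 1 := (Real.cos_le_one φ).lt_of_ne fun h1 ↦ hφ0 <|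
    (Real.cos_eq_one_iff_of_lt_of_lt (abs_lt.1 hφπ).1 (abs_lt.1 hφπ).2).1 h1
  have hk : 0 < |κ * B 0| := abs_pos.2 (mul_ne_zero hκ hB0)
  refine pos_of_mul_pos_left (b := B φ * B 0) ?_ hBφ.le
  calc (0 : ℝ) < |κ * B 0| * (1 - Real.cos φ) := mul_pos hk (by linarith)
    _ = _ := by
      rw [← sign_mul_self]
      linear_combination -((SignType.sign (κ * B 0) : ℝ) * B 0) * hφ

theorem exists_eq_circleMap_of_sphere_inter_sphere_eq_singleton {c c₁ : ℂ} {ρ r θ : ℝ}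
    (hρ : 0 < ρ) (h : sphere c₁ r ∩ sphere c ρ = {circleMap c ρ θ}) :
    ∃ lam : ℝ, lam ≠ 0 ∧ c₁ = circleMap c lam θ := by
  set L := line[ℝ, c, c₁]
  set x := circleMap c ρ θ
  have hx : x ∈ sphere c₁ r ∩ sphere c ρ := h.symm ▸ rfl
  have hxL : x ∈ L := by
    have hdist : ∀ p ∈ L, dist (EuclideanGeometry.reflection L x) p = dist x p := fun p hp ↦ by
      rw [dist_comm, EuclideanGeometry.dist_reflection_eq_of_mem _ hp, dist_comm]
    rw [← EuclideanGeometry.reflection_eq_self_iff, ← mem_singleton_iff, ← h]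
    exact ⟨(hdist c₁ (right_mem_affineSpan_pair ℝ c c₁)).trans hx.1,
      (hdist c (left_mem_affineSpan_pair ℝ c c₁)).trans hx.2⟩
  obtain ⟨t, ht⟩ := mem_affineSpan_pair_iff_exists_lineMap_eq.1 hxL
  have ht' : (t : ℂ) * (c₁ - c) = ρ * exp (θ * I) := by
    rw [AffineMap.lineMap_apply] at ht
    simp only [x, circleMap, vsub_eq_sub, vadd_eq_add, Complex.real_smul] at ht
    linear_combination ht
  have ht0 : (t : ℂ) ≠ 0 := by
    rintro h0
    rw [h0, zero_mul, eq_comm, mul_eq_zero] at ht'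
    simp [hρ.ne', Complex.exp_ne_zero] at ht'
  refine ⟨ρ / t, div_ne_zero hρ.ne' (by exact_mod_cast ht0), ?_⟩
  simp only [circleMap]
  push_cast
  field_simp
  linear_combination ht'

theorem inner_eq_zero_of_line_inter_sphere_eq_singleton {c p v x : ℂ} {ρ : ℝ}
    (h : {z : ℂ | ∃ t : ℝ, z = p + t • v} ∩ sphere c ρ = {x}) : inner ℝ v (x - c) = 0 := by
  have hx : x ∈ {z : ℂ | ∃ t : ℝ, z = p + t • v} ∩ sphere c ρ := h.symm ▸ rfl
  obtain ⟨⟨t, ht⟩, hxS⟩ := hx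
  refine (EuclideanGeometry.Sphere.secondInter_eq_self_iff (s := ⟨c, ρ⟩)).1 ?_
  rw [← mem_singleton_iff, ← h]
  refine ⟨⟨t + -2 * inner ℝ v (x - c) / inner ℝ v v, ?_⟩,
    (EuclideanGeometry.Sphere.secondInter_mem v).2 hxS⟩
  rw [EuclideanGeometry.Sphere.secondInter, vadd_eq_add, add_smul, ht]
  simp only [vsub_eq_sub]
  abel

def HasOneSidedPolarGraph (C : Set ℂ) (c : ℂ) (ρ θ w : ℝ) (s : SignType) : Prop :=
  ∃ A : ℝ → ℝ, A 0 = ρ ∧ ∀ φ, |φ| < w →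
    ContinuousAt A φ ∧ circleMap c (A φ) (θ + φ) ∈ C ∧ (φ ≠ 0 → 0 < (s : ℝ) * (A φ - ρ))

section PolarGraph

variable {C : Set ℂ} {c : ℂ} {ρ θ w : ℝ} {s : SignType}

theorem exists_hasOneSidedPolarGraph_of_eventually {A : ℝ → ℝ} (hA : A 0 = ρ)
    (h : ∀ᶠ φ in 𝓝 0, ContinuousAt A φ ∧ circleMap c (A φ) (θ + φ) ∈ C ∧
      (φ ≠ 0 → 0 < (s : ℝ) * (A φ - ρ))) :
    ∃ w > 0, HasOneSidedPolarGraph C c ρ θ w s := by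
  obtain ⟨w, hw, hball⟩ := Metric.eventually_nhds_iff.1 h
  exact ⟨w, hw, A, hA, fun φ hφ ↦ hball (by rwa [Real.dist_0_eq_abs])⟩

theorem HasOneSidedPolarGraph.exists_inter_nhds (h : HasOneSidedPolarGraph C c ρ θ w s)
    (hw : 0 < w) {U : Set ℂ} (hU : U ∈ 𝓝 (circleMap c ρ θ)) :
    ∃ w' > 0, HasOneSidedPolarGraph (C ∩ U) c ρ θ w' s := by
  obtain ⟨A, hA, hgraph⟩ := h
  have hcont : ContinuousAt (fun φ ↦ circleMap c (A φ) (θ + φ)) 0 := by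
    have := (hgraph 0 (by simpa using hw)).1
    unfold circleMap
    fun_prop
  have hnear : ∀ᶠ φ in 𝓝 (0 : ℝ), circleMap c (A φ) (θ + φ) ∈ U :=
    hcont.preimage_mem_nhds (by simpa [hA] using hU)
  refine exists_hasOneSidedPolarGraph_of_eventually hA ?_
  filter_upwards [eventually_abs_lt hw, hnear] with φ hφ hφU
  obtain ⟨hAφ, hmem, hside⟩ := hgraph φ hφ
  exact ⟨hAφ, ⟨hmem, hφU⟩, hside⟩

theorem HasOneSidedPolarGraph.inter_nonempty {C₁ C₂ : Set ℂ} {θ₁ θ₂ w₁ w₂ : ℝ}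
    (h₁ : HasOneSidedPolarGraph C₁ c ρ θ₁ w₁ s) (h₂ : HasOneSidedPolarGraph C₂ c ρ θ₂ w₂ s)
    (hθ : θ₁ < θ₂) (hw₁ : θ₂ - θ₁ < w₁) (hw₂ : θ₂ - θ₁ < w₂) : (C₁ ∩ C₂).Nonempty := by
  obtain ⟨A₁, hA₁, h₁⟩ := h₁
  obtain ⟨A₂, hA₂, h₂⟩ := h₂
  have h₁' : ∀ t ∈ Icc θ₁ θ₂, |t - θ₁| < w₁ := fun t ht ↦ by
    rw [abs_lt]; constructor <;> linarith [ht.1, ht.2]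
  have h₂' : ∀ t ∈ Icc θ₁ θ₂, |t - θ₂| < w₂ := fun t ht ↦ by
    rw [abs_lt]; constructor <;> linarith [ht.1, ht.2]
  set G : ℝ → ℝ := fun t ↦ s * (A₁ (t - θ₁) - A₂ (t - θ₂))
  have hG : ContinuousOn G (Icc θ₁ θ₂) := fun t ht ↦ by
    have hc₁ := (h₁ _ (h₁' t ht)).1
    have hc₂ := (h₂ _ (h₂' t ht)).1
    apply ContinuousAt.continuousWithinAt
    fun_prop
  have hG₁ : G θ₁ < 0 := by
    have := (h₂ _ (h₂' θ₁ (left_mem_Icc.2 hθ.le))).2.2 (sub_ne_zero.2 hθ.ne)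
    simp only [G, sub_self, hA₁]
    linarith
  have hG₂ : 0 < G θ₂ := by
    have := (h₁ _ (h₁' θ₂ (right_mem_Icc.2 hθ.le))).2.2 (sub_ne_zero.2 hθ.ne')
    simpa [G, hA₂] using this
  obtain ⟨t, ht, hGt⟩ := intermediate_value_Icc hθ.le hG ⟨hG₁.le, hG₂.le⟩
  have hs : (s : ℝ) ≠ 0 := by rintro h; simp [G, h] at hG₂
  have heq : A₁ (t - θ₁) = A₂ (t - θ₂) := by
    simpa [G, hs, sub_eq_zero] using hGt
  refine ⟨circleMap c (A₁ (t - θ₁)) t, ?_, ?_⟩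
  · simpa using (h₁ _ (h₁' t ht)).2.1
  · simpa [heq] using (h₂ _ (h₂' t ht)).2.1

end PolarGraph

theorem exists_hasOneSidedPolarGraph_sphere (c : ℂ) {ρ lam : ℝ} (θ : ℝ) (hρ : ρ ≠ 0)
    (hlam : lam ≠ 0) (hlamρ : lam ≠ ρ) :
    ∃ s, ∃ w > 0, HasOneSidedPolarGraph (sphere (circleMap c lam θ) |ρ - lam|) c ρ θ w s := by
  -- `A φ` is the root of `r ^ 2 - 2 r lam cos φ = ρ ^ 2 - 2 ρ lam` (this circle in polar
  -- coordinates about `c`) that equals `ρ` at `φ = 0`.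
  set D : ℝ → ℝ := fun φ ↦ (ρ - lam) ^ 2 - lam ^ 2 * Real.sin φ ^ 2
  set A : ℝ → ℝ := fun φ ↦ lam * Real.cos φ + SignType.sign (ρ - lam) * √(D φ)
  have hA0 : A 0 = ρ := by simp [A, D, Real.sqrt_sq_eq_abs]
  have hA : Continuous A := by fun_prop
  have hD : ∀ᶠ φ in 𝓝 0, 0 ≤ D φ :=
    (show Continuous D by fun_prop).continuousAt.eventually
      (le_mem_nhds (by simpa [D] using sq_pos_of_ne_zero (sub_ne_zero.2 hlamρ.symm)))
  have hquad : ∀ᶠ φ in 𝓝 0, A φ ^ 2 - 2 * A φ * lam * Real.cos φ = ρ ^ 2 - 2 * ρ * lam := by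
    filter_upwards [hD] with φ hDφ
    have hsign : (SignType.sign (ρ - lam) : ℝ) ^ 2 = 1 := by
      rcases lt_or_gt_of_ne (sub_ne_zero.2 hlamρ.symm) with h | h <;> simp [sign_neg, sign_pos, h]
    have := Real.sq_sqrt hDφ
    simp only [A, D] at this ⊢
    linear_combination (SignType.sign (ρ - lam) : ℝ) ^ 2 * this + D φ * hsign -
      lam ^ 2 * Real.sin_sq_add_cos_sq φ
  have hmem : ∀ᶠ φ in 𝓝 0, circleMap c (A φ) (θ + φ) ∈ sphere (circleMap c lam θ) |ρ - lam| := by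
    filter_upwards [hquad] with φ hφ
    rw [mem_sphere, ← sq_eq_sq₀ dist_nonneg (abs_nonneg _), sq_abs,
      dist_circleMap_add_circleMap_sq]
    linear_combination hφ
  have hside := eventually_pos_sign_mul_sub (A := A) (ρ := ρ) (κ := -2 * ρ * lam)
    (B := fun φ ↦ A φ + ρ - 2 * lam * Real.cos φ) (by fun_prop)
    (fun h ↦ hlamρ (by simp only [hA0, Real.cos_zero] at h; linarith))
    (by simp [hρ, hlam]) (by filter_upwards [hquad] with φ hφ; linear_combination hφ)
  exact ⟨_, exists_hasOneSidedPolarGraph_of_eventually hA0 <| by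
    filter_upwards [hmem, hside] with φ h₁ h₂ using ⟨hA.continuousAt, h₁, h₂⟩⟩

theorem exists_hasOneSidedPolarGraph_line {c p v : ℂ} {ρ θ : ℝ} (hρ : ρ ≠ 0) (hv : v ≠ 0)
    (hx : circleMap c ρ θ ∈ {z : ℂ | ∃ t : ℝ, z = p + t • v})
    (hperp : inner ℝ v (circleMap c ρ θ - c) = 0) :
    ∃ s, ∃ w > 0, HasOneSidedPolarGraph {z : ℂ | ∃ t : ℝ, z = p + t • v} c ρ θ w s := by
  obtain ⟨t₀, ht₀⟩ := hx
  set m := (exp (θ * I) * conj v).im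
  have hm : exp (θ * I) * conj v = m * I := by
    rw [circleMap_sub_center, circleMap_zero, Complex.inner, mul_assoc, re_ofReal_mul,
      mul_eq_zero, or_iff_right hρ] at hperp
    apply Complex.ext <;> simp [hperp, m, Complex.cos_ofReal_re, Complex.sin_ofReal_re]
  -- Tangent at `circleMap c ρ θ`, the line is `r cos φ = ρ` in polar coordinates about `c`.
  have hmem : ∀ φ, Real.cos φ ≠ 0 →
      circleMap c (ρ / Real.cos φ) (θ + φ) ∈ {z : ℂ | ∃ t : ℝ, z = p + t • v} := fun φ hφ ↦ by
    refine ⟨t₀ - ρ * (Real.sin φ / Real.cos φ) * m / normSq v, ?_⟩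
    have hcos : Complex.cos φ ≠ 0 := by rw [← ofReal_cos]; exact_mod_cast hφ
    have hv' : conj v ≠ 0 := by simpa using hv
    obtain rfl : p = c + ρ * exp (θ * I) - t₀ * v := by
      rw [circleMap, Complex.real_smul] at ht₀
      linear_combination -ht₀
    rw [circleMap, Complex.real_smul]
    push_cast
    rw [← mul_conj, add_mul, Complex.exp_add, Complex.exp_mul_I (φ : ℂ)]
    field_simp
    linear_combination (ρ : ℂ) * Complex.sin φ * (I * hm + m * I_sq)
  have hcos : ∀ᶠ φ in 𝓝 (0 : ℝ), 0 < Real.cos φ :=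
    Real.continuous_cos.continuousAt.eventually (lt_mem_nhds (by simp))
  have hside := eventually_pos_sign_mul_sub (A := fun φ ↦ ρ / Real.cos φ) (ρ := ρ) (κ := ρ)
    Real.continuous_cos.continuousAt (by simp) hρ
    (by filter_upwards [hcos] with φ hφ; field_simp)
  exact ⟨_, exists_hasOneSidedPolarGraph_of_eventually (A := fun φ ↦ ρ / Real.cos φ) (by simp) <| by
    filter_upwards [hcos, hside] with φ hφ hφs
    exact ⟨continuousAt_const.div Real.continuous_cos.continuousAt hφ.ne', hmem φ hφ.ne', hφs⟩⟩

theorem IsGenCircle.exists_hasOneSidedPolarGraph {C : Set ℂ} (hC : IsGenCircle C) {c : ℂ}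
    {ρ θ : ℝ} (hρ : 0 < ρ) (h : C ∩ sphere c ρ = {circleMap c ρ θ}) :
    ∃ s, ∃ w > 0, HasOneSidedPolarGraph C c ρ θ w s := by
  have hx : circleMap c ρ θ ∈ C ∩ sphere c ρ := h.symm ▸ rfl
  rcases hC with ⟨c₁, r, hr, rfl⟩ | ⟨p, v, hv, rfl⟩
  · obtain ⟨lam, hlam, rfl⟩ :=
      exists_eq_circleMap_of_sphere_inter_sphere_eq_singleton hρ h
    have hdist := dist_circleMap_add_circleMap_sq c ρ lam θ 0
    rw [add_zero, hx.1, Real.cos_zero] at hdist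
    obtain rfl : r = |ρ - lam| := by
      rw [← Real.sqrt_sq hr.le, ← Real.sqrt_sq_eq_abs, hdist]
      ring_nf
    refine exists_hasOneSidedPolarGraph_sphere c θ hρ.ne' hlam fun hlamρ ↦ ?_
    simp [hlamρ] at hr
  · exact exists_hasOneSidedPolarGraph_line hρ.ne' hv hx.1
      (inner_eq_zero_of_line_inter_sphere_eq_singleton h)

theorem IsCCC.exists_hasOneSidedPolarGraph {γ : Set ℍ} (hγ : IsCCC γ) {c : ℂ} {ρ θ : ℝ}
    (hρ : 0 < ρ) (hS : ∀ z ∈ sphere c ρ, 0 < z.im) {x : ℍ} (hx : (x : ℂ) = circleMap c ρ θ)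
    (h : γ ∩ {z : ℍ | ↑z ∈ sphere c ρ} = {x}) :
    ∃ s, ∃ w > 0, HasOneSidedPolarGraph ((↑) '' γ) c ρ θ w s := by
  obtain ⟨C, hC, -, rfl⟩ := hγ
  have hCS : C ∩ sphere c ρ = {circleMap c ρ θ} := by
    ext z
    refine ⟨fun ⟨hzC, hzS⟩ ↦ ?_, ?_⟩
    · have hz : (⟨z, hS z hzS⟩ : ℍ) ∈ {z : ℍ | ↑z ∈ C} ∩ {z : ℍ | ↑z ∈ sphere c ρ} := ⟨hzC, hzS⟩
      rw [h] at hz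
      rw [mem_singleton_iff, ← hx, ← hz]
    · rintro rfl
      have hxγ : x ∈ {z : ℍ | ↑z ∈ C} ∩ {z : ℍ | ↑z ∈ sphere c ρ} := h ▸ rfl
      rw [← hx]
      exact hxγ
  have himage : ((↑) '' {z : ℍ | ↑z ∈ C} : Set ℂ) = C ∩ {z | 0 < z.im} := by
    ext z
    exact ⟨by rintro ⟨z, hz, rfl⟩; exact ⟨hz, z.2⟩, fun ⟨hz, him⟩ ↦ ⟨⟨z, him⟩, hz, rfl⟩⟩
  obtain ⟨s, w, hw, hg⟩ := hC.exists_hasOneSidedPolarGraph hρ hCS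
  rw [himage]
  exact ⟨s, hg.exists_inter_nhds hw <|
    (isOpen_lt continuous_const continuous_im).mem_nhds (hS _ (circleMap_mem_sphere c hρ.le θ))⟩

theorem exists_lt_sub_lt_of_countable {β : Type*} [Countable β] (s : ℝ → β) {w : ℝ → ℝ}
    (hw : ∀ θ, 0 < w θ) {a b : ℝ} (hab : a < b) :
    ∃ θ₁ ∈ Icc a b, ∃ θ₂ ∈ Icc a b, θ₁ < θ₂ ∧ s θ₁ = s θ₂ ∧ θ₂ - θ₁ < w θ₁ ∧ θ₂ - θ₁ < w θ₂ := by
  choose n hn using fun θ ↦ exists_nat_one_div_lt (hw θ)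
  have hF : ¬ InjOn (fun θ ↦ (s θ, n θ, ⌊θ * (n θ + 1)⌋)) (Icc a b) := fun hinj ↦
    not_le.2 hab <| Cardinal.Real.Icc_countable_iff.1 <|
      (mapsTo_univ _ _).countable_of_injOn hinj countable_univ
  simp only [InjOn, Prod.mk.injEq, not_forall] at hF
  obtain ⟨θ, hθ, θ', hθ', ⟨hs, hn', hfl⟩, hne⟩ := hF
  rw [hn'] at hfl
  have hclose : |θ - θ'| < 1 / (n θ' + 1) := by
    have := Int.abs_sub_lt_one_of_floor_eq_floor hfl
    have hpos : (0 : ℝ) < n θ' + 1 := by positivity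
    rw [← sub_mul, abs_mul, abs_of_pos hpos] at this
    rwa [lt_div_iff₀ (by positivity)]
  have h₁ := hn θ
  have h₂ := hn θ'
  rw [hn'] at h₁
  rcases lt_or_gt_of_ne hne with h | h
  · rw [abs_sub_comm, abs_of_pos (sub_pos.2 h)] at hclose
    exact ⟨θ, hθ, θ', hθ', h, hs, by linarith, by linarith⟩
  · rw [abs_of_pos (sub_pos.2 h)] at hclose
    exact ⟨θ', hθ', θ, hθ, h, hs.symm, by linarith, by linarith⟩

theorem hyperbolic_circle_tangent_curves_intersect
    (S : Set UpperHalfPlane) (hS : IsHypCircle S)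
    (γ : UpperHalfPlane → Set UpperHalfPlane)
    (hγ : ∀ x ∈ S, IsCCC (γ x) ∧ γ x ∩ S = {x}) :
    ∃ x ∈ S, ∃ y ∈ S, x ≠ y ∧ (γ x ∩ γ y).Nonempty := by
  obtain ⟨c, ρ, hρ, hsph, rfl⟩ := hS
  let x : ℝ → ℍ := fun θ ↦ ⟨circleMap c ρ θ, hsph _ (circleMap_mem_sphere c hρ.le θ)⟩
  have hxS : ∀ θ, x θ ∈ {z : ℍ | ↑z ∈ sphere c ρ} := fun θ ↦ circleMap_mem_sphere c hρ.le θ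
  choose s w hw hs using fun θ ↦
    (hγ _ (hxS θ)).1.exists_hasOneSidedPolarGraph hρ hsph rfl (hγ _ (hxS θ)).2
  obtain ⟨θ₁, hθ₁, θ₂, hθ₂, hlt, hs₁₂, hw₁, hw₂⟩ := exists_lt_sub_lt_of_countable s hw one_pos
  refine ⟨x θ₁, hxS θ₁, x θ₂, hxS θ₂, fun h ↦ hlt.ne ?_, ?_⟩
  · refine eq_of_circleMap_eq hρ.ne' ?_ (congrArg UpperHalfPlane.coe h)
    rw [abs_sub_comm, abs_of_pos (sub_pos.2 hlt)]
    linarith [hθ₁.1, hθ₂.2, Real.pi_gt_three]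
  · rw [← image_nonempty, image_inter UpperHalfPlane.coe_injective]
    exact (hs θ₁).inter_nonempty (hs₁₂ ▸ hs θ₂) hlt hw₁ hw₂
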